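/- Let F be a weakly convex sparseness measure with parameter ρ ≤ 0, J(x) = Σ_{i=1}^N F(x_i), and let γ ∈ [0,1) be a null-space constant bound for (J,A,K). Let M0 > 0 and define C1 = (F(M0)/M0)·(1−γ)/(1+γ) and C2 = (α√N + C1)/(C1·σ). Suppose x*, x ∈ ℝ^N satisfy ‖x*‖₀ ≤ K, x ≠ x*, ‖x − x*‖₂ ≤ M0, (−4ρ)·‖x − x*‖₂ ≤ C1, and ‖x − x*‖₂ ≥ 2·C2·‖A(x − x*)‖₂. Then for every vector g ∈ ℝ^N with g_i ∈ ∂F(x_i) for each i, one has ⟨x − x*, g⟩ > 0; in fact ⟨x − x*, g⟩ ≥ (C1/4)·‖x − x*‖₂. -/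

import Mathlib

/-!
Write `h = x - x*` and split `h = z + w` with `z ∈ ker A` and `w ⊥ ker A`. On the support `S` of
`x*` the triangle inequality for `F` gives `J(x) - J(x*) ≥ Σ_{Sᶜ} F(h) - Σ_S F(h)`, and
passing from `h` to `z` costs at most `J(w) ≤ α √N ‖w‖`. For `z` the null space property together
with `F(t) ≥ (F(M₀)/M₀)|t|` on `[-M₀, M₀]` yields `Σ_{Sᶜ} F(z) - Σ_S F(z) ≥ C₁ ‖z‖ ≥ C₁ (‖h‖ - ‖w‖)`.
Since `σ ‖w‖ ≤ ‖A h‖`, the annulus condition makes `(C₁ + α √N) ‖w‖ ≤ C₁ ‖h‖ / 2`, so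
`J(x) - J(x*) ≥ C₁ ‖h‖ / 2`. Finally the subgradient inequality of the `ρ`-weakly convex `F`
gives `⟨h, g⟩ ≥ J(x) - J(x*) + ρ ‖h‖²`, and `-4ρ ‖h‖ ≤ C₁` bounds the last term by `C₁ ‖h‖ / 4`.
-/

open Filter Set

/-- Weak convexity on `[0,∞)` with parameter `ρ`. -/
def WeaklyConvexOnNonneg (F : ℝ → ℝ) (ρ : ℝ) : Prop :=
  ∀ t₁ t₂ : ℝ, 0 ≤ t₁ → 0 ≤ t₂ → ∀ l : ℝ, 0 ≤ l → l ≤ 1 →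
    F (l * t₁ + (1 - l) * t₂) ≤
      l * F t₁ + (1 - l) * F t₂ - ρ * l * (1 - l) * (t₁ - t₂) ^ 2

/-- `F` is a weakly convex sparseness measure with weak-convexity parameter `ρ ≤ 0`. -/
structure IsWCSM (F : ℝ → ℝ) (ρ : ℝ) : Prop where
  zero : F 0 = 0
  even : ∀ t, F (-t) = F t
  nontrivial : ∃ t, F t ≠ 0
  mono : ∀ s t : ℝ, 0 ≤ s → s ≤ t → F s ≤ F t
  ratio_anti : ∀ s t : ℝ, 0 < s → s ≤ t → F t / t ≤ F s / s
  rho_nonpos : ρ ≤ 0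
  wconv : WeaklyConvexOnNonneg F ρ

/-- `α = lim_{t→0⁺} F(t)/t`, finite and positive, with `F(t) ≤ α|t|` for all `t`. -/
def IsAlpha (F : ℝ → ℝ) (α : ℝ) : Prop :=
  0 < α ∧ Tendsto (fun t => F t / t) (nhdsWithin 0 (Set.Ioi 0)) (nhds α) ∧
    ∀ t : ℝ, F t ≤ α * |t|

/-- The generalized gradient set `∂F(t)`; by convention `∂F(0) = {0}`. -/
noncomputable def genGrad (F : ℝ → ℝ) (t : ℝ) : Set ℝ :=
  if t = 0 then {0}
  else {f : ℝ | ∀ ν : ℝ,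
    ν * f ≤ Filter.limsup (fun θ => (F (t + θ * ν) - F t) / θ) (nhdsWithin 0 (Set.Ioi 0))}

/-- Euclidean (`ℓ2`) norm of a vector. -/
noncomputable def l2 {n : ℕ} (x : Fin n → ℝ) : ℝ := Real.sqrt (∑ i, (x i) ^ 2)

/-- `ℓ1` norm of a vector. -/
def l1 {n : ℕ} (x : Fin n → ℝ) : ℝ := ∑ i, |x i|

/-- `ℓ0` "norm": number of nonzero entries. -/
noncomputable def l0 {n : ℕ} (x : Fin n → ℝ) : ℕ :=
  (Finset.univ.filter (fun i => x i ≠ 0)).card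

/-- `z_S`: the vector equal to `z` on `S` and zero elsewhere. -/
def restr {n : ℕ} (x : Fin n → ℝ) (S : Finset (Fin n)) : Fin n → ℝ :=
  fun i => if i ∈ S then x i else 0

/-- `γ` is a null-space-constant bound for `(J, A, K)`. -/
def NSCBound {M N : ℕ} (J : (Fin N → ℝ) → ℝ) (A : Matrix (Fin M) (Fin N) ℝ)
    (K : ℕ) (γ : ℝ) : Prop :=
  ∀ z : Fin N → ℝ, A.mulVec z = 0 → ∀ S : Finset (Fin N), S.card ≤ K →
    J (restr z S) ≤ γ * J (restr z Sᶜ)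

/-- Spectral norm (`ℓ2`-operator norm) of a matrix. -/
noncomputable def opNorm2 {m n : ℕ} (A : Matrix (Fin m) (Fin n) ℝ) : ℝ :=
  sSup {c : ℝ | ∃ v : Fin n → ℝ, l2 v ≤ 1 ∧ c = l2 (A.mulVec v)}

open Topology

section Vectors

variable {n : ℕ}

theorem l2_eq_norm (v : Fin n → ℝ) : l2 v = ‖WithLp.toLp 2 v‖ := by
  simp [l2, EuclideanSpace.norm_eq]

theorem l2_pos {v : Fin n → ℝ} (hv : v ≠ 0) : 0 < l2 v := by
  rw [l2_eq_norm, norm_pos_iff]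
  exact fun h => hv (congrArg WithLp.ofLp h)

theorem l2_add_le (v w : Fin n → ℝ) : l2 (v + w) ≤ l2 v + l2 w := by
  simp only [l2_eq_norm, WithLp.toLp_add]
  exact norm_add_le _ _

theorem l2_sq (v : Fin n → ℝ) : l2 v ^ 2 = ∑ i, v i ^ 2 :=
  Real.sq_sqrt (Finset.sum_nonneg fun _ _ => sq_nonneg _)

theorem abs_le_l2 (v : Fin n → ℝ) (i : Fin n) : |v i| ≤ l2 v := by
  rw [l2, ← Real.sqrt_sq_eq_abs]
  exact Real.sqrt_le_sqrt <|
    Finset.single_le_sum (f := fun j => v j ^ 2) (fun j _ => sq_nonneg _) (Finset.mem_univ i)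

theorem l2_le_l1 (v : Fin n → ℝ) : l2 v ≤ l1 v := by
  have hsq : ∑ i, v i ^ 2 ≤ l1 v ^ 2 := by
    simpa [l1, sq_abs] using Finset.sum_sq_le_sq_sum_of_nonneg (s := Finset.univ)
      (f := fun i => |v i|) fun i _ => abs_nonneg _
  have hl1 : 0 ≤ l1 v := Finset.sum_nonneg fun i _ => abs_nonneg (v i)
  simpa [l2, Real.sqrt_sq hl1] using Real.sqrt_le_sqrt hsq

theorem l1_le_sqrt_mul_l2 (v : Fin n → ℝ) : l1 v ≤ Real.sqrt n * l2 v := by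
  simpa [l1, l2, sq_abs] using
    Real.sum_mul_le_sqrt_mul_sqrt Finset.univ (fun _ => (1 : ℝ)) fun i => |v i|

theorem sum_le_mul_sqrt_mul_l2 {F : ℝ → ℝ} {α : ℝ} (hlin : ∀ t, F t ≤ α * |t|) (hα : 0 ≤ α)
    (w : Fin n → ℝ) : ∑ i, F (w i) ≤ α * Real.sqrt n * l2 w :=
  calc ∑ i, F (w i) ≤ α * l1 w := by
        rw [l1, Finset.mul_sum]
        exact Finset.sum_le_sum fun i _ => hlin (w i)
    _ ≤ α * (Real.sqrt n * l2 w) := mul_le_mul_of_nonneg_left (l1_le_sqrt_mul_l2 w) hα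
    _ = α * Real.sqrt n * l2 w := by ring

theorem sum_apply_restr {F : ℝ → ℝ} (hF : F 0 = 0) (v : Fin n → ℝ) (S : Finset (Fin n)) :
    ∑ i, F (restr v S i) = ∑ i ∈ S, F (v i) := by
  simp only [restr, apply_ite F, hF]
  rw [Finset.sum_ite_mem, Finset.univ_inter]

end Vectors

theorem Matrix.exists_add_mem_ker_orthogonal {m n : ℕ} (A : Matrix (Fin m) (Fin n) ℝ)
    (h : Fin n → ℝ) :
    ∃ z w : Fin n → ℝ, z + w = h ∧ A.mulVec z = 0 ∧
      (∀ z' : Fin n → ℝ, A.mulVec z' = 0 → ∑ i, w i * z' i = 0) ∧ l2 z ≤ l2 h := by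
  set K := LinearMap.ker (Matrix.toEuclideanLin A)
  set v := WithLp.toLp 2 h
  refine ⟨(K.starProjection v).ofLp, (v - K.starProjection v).ofLp, by simp [v], ?_, ?_, ?_⟩
  · exact congrArg WithLp.ofLp (K.starProjection_apply_mem v)
  · intro z' hz'
    have := (Submodule.mem_orthogonal' K _).mp (K.sub_starProjection_mem_orthogonal v)
      (WithLp.toLp 2 z') (congrArg (WithLp.toLp 2) hz')
    simpa [PiLp.inner_apply, mul_comm] using this
  · simpa [l2_eq_norm, v] using K.norm_starProjection_apply_le v

namespace IsWCSM

variable {n : ℕ} {F : ℝ → ℝ} {ρ : ℝ} (hF : IsWCSM F ρ)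
include hF

theorem apply_abs (t : ℝ) : F |t| = F t := by
  rcases abs_choice t with h | h <;> simp [h, hF.even]

theorem apply_sub_comm (s t : ℝ) : F (s - t) = F (t - s) := by
  rw [← neg_sub, hF.even]

theorem nonneg (t : ℝ) : 0 ≤ F t := by
  rw [← hF.apply_abs, ← hF.zero]
  exact hF.mono 0 |t| le_rfl (abs_nonneg t)

theorem add_le_of_nonneg {a b : ℝ} (ha : 0 ≤ a) (hb : 0 ≤ b) : F (a + b) ≤ F a + F b := by
  rcases ha.eq_or_lt with rfl | ha
  · simp [hF.zero]
  rcases hb.eq_or_lt with rfl | hb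
  · simp [hF.zero]
  have h₁ := mul_le_mul_of_nonneg_left (hF.ratio_anti a (a + b) ha (by linarith)) ha.le
  have h₂ := mul_le_mul_of_nonneg_left (hF.ratio_anti b (a + b) hb (by linarith)) hb.le
  rw [mul_div_cancel₀ _ ha.ne'] at h₁
  rw [mul_div_cancel₀ _ hb.ne'] at h₂
  have hab : (a + b) * (F (a + b) / (a + b)) = F (a + b) := mul_div_cancel₀ _ (by positivity)
  linarith

theorem le_add_apply_sub (u v : ℝ) : F u ≤ F v + F (u - v) := by
  rw [← hF.apply_abs u, ← hF.apply_abs v, ← hF.apply_abs (u - v)]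
  calc F |u| ≤ F (|v| + |u - v|) :=
        hF.mono _ _ (abs_nonneg u) (by simpa using abs_add_le v (u - v))
    _ ≤ F |v| + F |u - v| := hF.add_le_of_nonneg (abs_nonneg v) (abs_nonneg (u - v))

theorem pos_of_pos {M₀ : ℝ} (hM₀ : 0 < M₀) : 0 < F M₀ := by
  refine (hF.nonneg M₀).lt_of_ne fun h => ?_
  obtain ⟨t, ht⟩ := hF.nontrivial
  rw [← hF.apply_abs] at ht
  refine ht (le_antisymm ?_ (hF.nonneg _))
  rcases le_or_gt |t| M₀ with htM | htM
  · exact h ▸ hF.mono _ _ (abs_nonneg t) htM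
  · have := hF.ratio_anti M₀ |t| hM₀ htM.le
    rw [← h, zero_div, div_le_iff₀ (hM₀.trans htM), zero_mul] at this
    exact this

theorem div_mul_abs_le {M₀ c : ℝ} (hc : |c| ≤ M₀) : F M₀ / M₀ * |c| ≤ F c := by
  rcases eq_or_ne c 0 with rfl | hc0
  · simp [hF.zero]
  have hc0 := abs_pos.mpr hc0
  calc F M₀ / M₀ * |c| ≤ F |c| / |c| * |c| :=
        mul_le_mul_of_nonneg_right (hF.ratio_anti |c| M₀ hc0 hc) hc0.le
    _ = F c := by rw [div_mul_cancel₀ _ hc0.ne', hF.apply_abs]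

theorem sum_compl_sub_sum_le_sum_sub {x y : Fin n → ℝ} {S : Finset (Fin n)}
    (hy : ∀ i ∉ S, y i = 0) :
    ∑ i ∈ Sᶜ, F (x i - y i) - ∑ i ∈ S, F (x i - y i) ≤ ∑ i, F (x i) - ∑ i, F (y i) := by
  have hS : ∑ i ∈ S, (F (y i) - F (x i - y i)) ≤ ∑ i ∈ S, F (x i) :=
    Finset.sum_le_sum fun i _ => by
      linarith [hF.le_add_apply_sub (y i) (x i), hF.apply_sub_comm (y i) (x i)]
  have hSc : ∑ i ∈ Sᶜ, F (x i - y i) = ∑ i ∈ Sᶜ, (F (x i) - F (y i)) :=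
    Finset.sum_congr rfl fun i hi => by
      rw [hy i (Finset.mem_compl.mp hi), sub_zero, hF.zero, sub_zero]
  rw [← Finset.sum_add_sum_compl S fun i => F (x i),
    ← Finset.sum_add_sum_compl S fun i => F (y i), hSc, Finset.sum_sub_distrib] at *
  linarith

theorem sum_compl_sub_sum_sub_sum_le (z w : Fin n → ℝ) (S : Finset (Fin n)) :
    ∑ i ∈ Sᶜ, F (z i) - ∑ i ∈ S, F (z i) - ∑ i, F (w i) ≤
      ∑ i ∈ Sᶜ, F (z i + w i) - ∑ i ∈ S, F (z i + w i) := by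
  have hSc : ∑ i ∈ Sᶜ, F (z i) ≤ ∑ i ∈ Sᶜ, (F (z i + w i) + F (w i)) :=
    Finset.sum_le_sum fun i _ => by
      simpa [add_sub_cancel_left, hF.even] using hF.le_add_apply_sub (z i) (z i + w i)
  have hS : ∑ i ∈ S, F (z i + w i) ≤ ∑ i ∈ S, (F (z i) + F (w i)) :=
    Finset.sum_le_sum fun i _ => by
      simpa using hF.le_add_apply_sub (z i + w i) (z i)
  rw [← Finset.sum_add_sum_compl S fun i => F (w i)]
  rw [Finset.sum_add_distrib] at hS hSc
  linarith

theorem mul_l2_le_sum_compl_sub_sum {m K : ℕ} {A : Matrix (Fin m) (Fin n) ℝ} {γ M₀ : ℝ}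
    (hNSC : NSCBound (fun x => ∑ i, F (x i)) A K γ) (hγ₀ : 0 ≤ γ) (hγ₁ : γ ≤ 1)
    (hM₀ : 0 ≤ M₀) {z : Fin n → ℝ} (hz : A.mulVec z = 0) (hzM₀ : ∀ i, |z i| ≤ M₀)
    {S : Finset (Fin n)} (hS : S.card ≤ K) :
    F M₀ / M₀ * ((1 - γ) / (1 + γ)) * l2 z ≤ ∑ i ∈ Sᶜ, F (z i) - ∑ i ∈ S, F (z i) := by
  have hnsc : ∑ i ∈ S, F (z i) ≤ γ * ∑ i ∈ Sᶜ, F (z i) := by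
    simpa only [sum_apply_restr hF.zero] using hNSC z hz S hS
  have hβ : F M₀ / M₀ * l2 z ≤ (1 + γ) * ∑ i ∈ Sᶜ, F (z i) :=
    calc F M₀ / M₀ * l2 z ≤ F M₀ / M₀ * l1 z :=
          mul_le_mul_of_nonneg_left (l2_le_l1 z) (div_nonneg (hF.nonneg M₀) hM₀)
      _ ≤ ∑ i, F (z i) := by
        rw [l1, Finset.mul_sum]
        exact Finset.sum_le_sum fun i _ => hF.div_mul_abs_le (hzM₀ i)
      _ ≤ (1 + γ) * ∑ i ∈ Sᶜ, F (z i) := by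
        rw [← Finset.sum_add_sum_compl S]
        linarith
  have hγ : 0 < 1 + γ := by linarith
  calc F M₀ / M₀ * ((1 - γ) / (1 + γ)) * l2 z
        = (1 - γ) / (1 + γ) * (F M₀ / M₀ * l2 z) := by ring
    _ ≤ (1 - γ) / (1 + γ) * ((1 + γ) * ∑ i ∈ Sᶜ, F (z i)) := by gcongr
    _ = (1 - γ) * ∑ i ∈ Sᶜ, F (z i) := by field_simp
    _ ≤ ∑ i ∈ Sᶜ, F (z i) - ∑ i ∈ S, F (z i) := by nlinarith

theorem mul_l2_sub_le_sum_sub {m K : ℕ} {A : Matrix (Fin m) (Fin n) ℝ} {α γ M₀ : ℝ}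
    (hlin : ∀ t, F t ≤ α * |t|) (hα : 0 ≤ α)
    (hNSC : NSCBound (fun x => ∑ i, F (x i)) A K γ) (hγ₀ : 0 ≤ γ) (hγ₁ : γ ≤ 1)
    (hM₀ : 0 ≤ M₀) {x xs z w : Fin n → ℝ} (hxs : l0 xs ≤ K) (hzw : z + w = x - xs)
    (hz : A.mulVec z = 0) (hzM₀ : ∀ i, |z i| ≤ M₀) :
    F M₀ / M₀ * ((1 - γ) / (1 + γ)) * l2 z - α * Real.sqrt n * l2 w ≤
      ∑ i, F (x i) - ∑ i, F (xs i) := by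
  set S := Finset.univ.filter (xs · ≠ 0)
  have hsupp := hF.sum_compl_sub_sum_le_sum_sub (x := x) (y := xs) (S := S) (by simp [S])
  have hpert := hF.sum_compl_sub_sum_sub_sum_le z w S
  have hnsp := hF.mul_l2_le_sum_compl_sub_sum hNSC hγ₀ hγ₁ hM₀ hz hzM₀ hxs
  have hw := sum_le_mul_sqrt_mul_l2 hlin hα w
  have hzwi (i : Fin n) : z i + w i = x i - xs i := congrFun hzw i
  simp only [hzwi] at hpert
  linarith

section Subgradient

variable {α : ℝ} (hlin : ∀ t, F t ≤ α * |t|)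
include hlin

theorem isCoboundedUnder_diffQuot (t ν : ℝ) :
    IsCoboundedUnder (· ≤ ·) (𝓝[>] (0 : ℝ)) fun θ => (F (t + θ * ν) - F t) / θ := by
  refine isCoboundedUnder_le_of_eventually_le _ (x := -(α * |ν|)) ?_
  filter_upwards [self_mem_nhdsWithin] with θ (hθ : 0 < θ)
  have h₁ := hF.le_add_apply_sub t (t + θ * ν)
  have h₂ := hlin (t - (t + θ * ν))
  have habs : |t - (t + θ * ν)| = θ * |ν| := by
    rw [show t - (t + θ * ν) = -(θ * ν) by ring, abs_neg, abs_mul, abs_of_pos hθ]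
  rw [habs] at h₂
  rw [le_div_iff₀ hθ]
  linarith

theorem mul_le_of_mem_genGrad {t g ν c : ℝ} (ht : t ≠ 0) (hg : g ∈ genGrad F t)
    (hc : ∀ᶠ θ in 𝓝[>] (0 : ℝ), (F (t + θ * ν) - F t) / θ ≤ c) : ν * g ≤ c := by
  rw [genGrad, if_neg ht] at hg
  exact (hg ν).trans (limsup_le_of_le (hF.isCoboundedUnder_diffQuot hlin t ν) hc)

theorem nonneg_of_mem_genGrad {t g : ℝ} (ht : 0 < t) (hg : g ∈ genGrad F t) : 0 ≤ g := by
  have := hF.mul_le_of_mem_genGrad hlin (ν := -1) (c := 0) ht.ne' hg <| by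
    filter_upwards [Ioo_mem_nhdsGT ht] with θ ⟨hθ, hθt⟩
    refine div_nonpos_of_nonpos_of_nonneg ?_ hθ.le
    linarith [hF.mono (t + θ * -1) t (by linarith) (by linarith)]
  linarith

theorem mul_sub_le_of_mem_genGrad_of_pos_of_nonneg {t s g : ℝ} (ht : 0 < t) (hs : 0 ≤ s)
    (hg : g ∈ genGrad F t) : g * (s - t) ≤ F s - F t - ρ * (s - t) ^ 2 := by
  rw [mul_comm]
  refine hF.mul_le_of_mem_genGrad hlin ht.ne' hg ?_
  filter_upwards [Ioo_mem_nhdsGT one_pos] with θ ⟨hθ₀, hθ₁⟩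
  have hconv := hF.wconv s t hs ht.le θ hθ₀.le hθ₁.le
  rw [show θ * s + (1 - θ) * t = t + θ * (s - t) by ring] at hconv
  rw [div_le_iff₀ hθ₀]
  nlinarith [mul_nonpos_of_nonpos_of_nonneg hF.rho_nonpos (by positivity : 0 ≤ θ ^ 2 * (s - t) ^ 2)]

theorem mul_sub_le_of_mem_genGrad_of_pos {t s g : ℝ} (ht : 0 < t) (hg : g ∈ genGrad F t) :
    g * (s - t) ≤ F s - F t - ρ * (s - t) ^ 2 := by
  -- replacing `s` by `|s|` moves it towards `t > 0`, and `g ≥ 0`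
  have h := hF.mul_sub_le_of_mem_genGrad_of_pos_of_nonneg hlin ht (abs_nonneg s) hg
  have hg₀ := hF.nonneg_of_mem_genGrad hlin ht hg
  have hs := le_abs_self s
  have hsq : (|s| - t) ^ 2 ≤ (s - t) ^ 2 := by nlinarith [sq_abs s]
  rw [hF.apply_abs] at h
  nlinarith [hF.rho_nonpos]

omit hlin in
theorem neg_mem_genGrad_neg {t g : ℝ} (hg : g ∈ genGrad F t) : -g ∈ genGrad F (-t) := by
  unfold genGrad at hg ⊢
  split_ifs at hg ⊢ with h₁ h₂ h₂
  · simp_all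
  · exact absurd (neg_eq_zero.mp h₁) h₂
  · exact absurd (neg_eq_zero.mpr h₂) h₁
  · intro ν
    have hquot : (fun θ => (F (-t + θ * ν) - F (-t)) / θ)
        = fun θ => (F (t + θ * -ν) - F t) / θ := by
      funext θ
      rw [show -t + θ * ν = -(t + θ * -ν) by ring, hF.even, hF.even]
    simpa [hquot] using hg (-ν)

theorem mul_sub_le_of_mem_genGrad {t s g : ℝ} (hg : g ∈ genGrad F t) :
    g * (s - t) ≤ F s - F t - ρ * (s - t) ^ 2 := by
  rcases lt_trichotomy t 0 with ht | rfl | ht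
  · have := hF.mul_sub_le_of_mem_genGrad_of_pos hlin (neg_pos.mpr ht)
      (hF.neg_mem_genGrad_neg hg) (s := -s)
    rw [hF.even, hF.even] at this
    nlinarith
  · rw [genGrad, if_pos rfl, mem_singleton_iff] at hg
    subst hg
    nlinarith [hF.nonneg s, hF.zero, hF.rho_nonpos]
  · exact hF.mul_sub_le_of_mem_genGrad_of_pos hlin ht hg

theorem sum_sub_sum_add_mul_l2_sq_le (x y g : Fin n → ℝ) (hg : ∀ i, g i ∈ genGrad F (x i)) :
    ∑ i, F (x i) - ∑ i, F (y i) + ρ * l2 (x - y) ^ 2 ≤ ∑ i, (x i - y i) * g i := by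
  rw [l2_sq, Finset.mul_sum, ← Finset.sum_sub_distrib, ← Finset.sum_add_distrib]
  refine Finset.sum_le_sum fun i _ => ?_
  have := hF.mul_sub_le_of_mem_genGrad hlin (hg i) (s := y i)
  simp only [Pi.sub_apply]
  nlinarith

end Subgradient

end IsWCSM

theorem stmt11_general {M N : ℕ} (F : ℝ → ℝ) (ρ α : ℝ)
    (hF : IsWCSM F ρ) (hα : IsAlpha F α)
    (A : Matrix (Fin M) (Fin N) ℝ) (K : ℕ)
    (γ : ℝ) (hγ0 : 0 ≤ γ) (hγ1 : γ < 1)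
    (hNSC : NSCBound (fun x => ∑ i, F (x i)) A K γ)
    (σ : ℝ) (hσ : 0 < σ)
    (hσmin : ∀ v : Fin N → ℝ,
      (∀ z : Fin N → ℝ, A.mulVec z = 0 → (∑ i, v i * z i) = 0) →
      σ * l2 v ≤ l2 (A.mulVec v))
    (M0 : ℝ) (hM0 : 0 < M0) (C1 C2 : ℝ)
    (hC1 : C1 = F M0 / M0 * ((1 - γ) / (1 + γ)))
    (hC2 : C2 = (α * Real.sqrt N + C1) / (C1 * σ))
    (xs x : Fin N → ℝ) (hxs : l0 xs ≤ K) (hne : x ≠ xs)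
    (hball : l2 (x - xs) ≤ M0)
    (hrho : -4 * ρ * l2 (x - xs) ≤ C1)
    (hann : 2 * C2 * l2 (A.mulVec (x - xs)) ≤ l2 (x - xs)) :
    ∀ g : Fin N → ℝ, (∀ i, g i ∈ genGrad F (x i)) →
      0 < (∑ i, (x i - xs i) * g i) ∧
      C1 / 4 * l2 (x - xs) ≤ ∑ i, (x i - xs i) * g i := by
  intro g hg
  have hC1pos : 0 < C1 := by
    have := hF.pos_of_pos hM0
    have : 0 < 1 - γ := by linarith
    rw [hC1]; positivity
  have hC2pos : 0 < C2 := by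
    rw [hC2]
    exact div_pos (add_pos_of_nonneg_of_pos (by have := hα.1; positivity) hC1pos) (by positivity)
  obtain ⟨z, w, hzw, hz, hw, hzh⟩ := A.exists_add_mem_ker_orthogonal (x - xs)
  have hJ : C1 * l2 z - α * Real.sqrt N * l2 w ≤ ∑ i, F (x i) - ∑ i, F (xs i) := by
    rw [hC1]
    exact hF.mul_l2_sub_le_sum_sub hα.2.2 hα.1.le hNSC hγ0 hγ1.le hM0.le hxs hzw hz
      fun i => (abs_le_l2 z i).trans (hzh.trans hball)
  have hwh : (α * Real.sqrt N + C1) * l2 w ≤ C1 / 2 * l2 (x - xs) := by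
    have hσw : σ * l2 w ≤ l2 (A.mulVec (x - xs)) := by
      simpa [← hzw, Matrix.mulVec_add, hz] using hσmin w hw
    have hC2' : α * Real.sqrt N + C1 = C1 * C2 * σ := by
      rw [hC2]
      field_simp
    calc (α * Real.sqrt N + C1) * l2 w = C1 * C2 * (σ * l2 w) := by rw [hC2']; ring
      _ ≤ C1 * C2 * l2 (A.mulVec (x - xs)) := by gcongr
      _ ≤ C1 / 2 * l2 (x - xs) := by nlinarith
  have hzw_le : C1 * l2 (x - xs) ≤ C1 * l2 z + C1 * l2 w := by
    rw [← mul_add, ← hzw]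
    exact mul_le_mul_of_nonneg_left (l2_add_le z w) hC1pos.le
  have hρ : -(C1 / 4) * l2 (x - xs) ≤ ρ * l2 (x - xs) ^ 2 := by
    nlinarith [l2_pos (sub_ne_zero.mpr hne)]
  have hmain : C1 / 4 * l2 (x - xs) ≤ ∑ i, (x i - xs i) * g i := by
    linarith [hF.sum_sub_sum_add_mul_l2_sq_le hα.2.2 x xs g hg]
  exact ⟨(mul_pos (by positivity) (l2_pos (sub_ne_zero.mpr hne))).trans_le hmain, hmain⟩

/-- Lemma 4: in the annulus, `⟨x − x*, g⟩ > 0`, in fact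
`⟨x − x*, g⟩ ≥ (C1/4)‖x − x*‖₂`, for any generalized-gradient selection `g`. -/
theorem stmt11 {M N : ℕ} (hMN : M < N) (F : ℝ → ℝ) (ρ α : ℝ)
    (hF : IsWCSM F ρ) (hα : IsAlpha F α)
    (A : Matrix (Fin M) (Fin N) ℝ) (K : ℕ)
    (γ : ℝ) (hγ0 : 0 ≤ γ) (hγ1 : γ < 1)
    (hNSC : NSCBound (fun x => ∑ i, F (x i)) A K γ)
    (σ : ℝ) (hσ : 0 < σ)
    (hσmin : ∀ v : Fin N → ℝ,
      (∀ z : Fin N → ℝ, A.mulVec z = 0 → (∑ i, v i * z i) = 0) →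
      σ * l2 v ≤ l2 (A.mulVec v))
    (M0 : ℝ) (hM0 : 0 < M0) (C1 C2 : ℝ)
    (hC1 : C1 = F M0 / M0 * ((1 - γ) / (1 + γ)))
    (hC2 : C2 = (α * Real.sqrt N + C1) / (C1 * σ))
    (xs x : Fin N → ℝ) (hxs : l0 xs ≤ K) (hne : x ≠ xs)
    (hball : l2 (x - xs) ≤ M0)
    (hrho : -4 * ρ * l2 (x - xs) ≤ C1)
    (hann : 2 * C2 * l2 (A.mulVec (x - xs)) ≤ l2 (x - xs)) :
    ∀ g : Fin N → ℝ, (∀ i, g i ∈ genGrad F (x i)) →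
      0 < (∑ i, (x i - xs i) * g i) ∧
      C1 / 4 * l2 (x - xs) ≤ ∑ i, (x i - xs i) * g i :=
  stmt11_general F ρ α hF hα A K γ hγ0 hγ1 hNSC σ hσ hσmin M0 hM0 C1 C2 hC1 hC2 xs x hxs hne hball
    hrho hann
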